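/- Let n, k be positive integers, a₁,…,a_k ∈ ℤ, and b ∈ {0,…,n-1}. The number of binary solutions (x₁,…,x_k) ∈ {0,1}^k of a₁x₁ + ⋯ + a_k x_k ≡ b (mod n) equals (2^k/n) ∑_{m=1}^{n} e(ηm/n) ∏_{j=1}^{k} cos(π a_j m / n), where η = −b + (1/2)∑_{j=1}^{k} a_j. -/

import Mathlib

open Complex Finset

noncomputable def e (x : ℂ) : ℂ := Complex.exp (2 * Real.pi * Complex.I * x)

lemma e_add (x y : ℂ) : e (x + y) = e x * e y := by
  simp [e, mul_add, Complex.exp_add]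

lemma e_sum {ι : Type*} (s : Finset ι) (f : ι → ℂ) :
    e (∑ i ∈ s, f i) = ∏ i ∈ s, e (f i) := by
  simp [e, Finset.mul_sum, Complex.exp_sum]

lemma e_int (z : ℤ) : e z = 1 := by
  rw [e, show 2 * (Real.pi : ℂ) * Complex.I * (z : ℂ) = (z : ℂ) * (2 * Real.pi * Complex.I) by ring,
    Complex.exp_int_mul_two_pi_mul_I]

lemma orth (n : ℕ) (hn : 0 < n) (z : ℤ) :
    ∑ m ∈ Finset.range n, e ((z : ℂ) * m / n) = if (n : ℤ) ∣ z then (n : ℂ) else 0 := by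
  have hn0 : (n : ℂ) ≠ 0 := Nat.cast_ne_zero.2 hn.ne'
  have hpow : ∀ m : ℕ, e ((z : ℂ) * m / n) = (e ((z : ℂ) / n)) ^ m := by
    intro m
    rw [e, e, ← Complex.exp_nat_mul]
    congr 1
    ring
  split_ifs with h
  · obtain ⟨c, rfl⟩ := h
    have h1 : ∀ m ∈ Finset.range n, e ((((n : ℤ) * c : ℤ) : ℂ) * m / n) = 1 := by
      intro m _
      have h2 : (((n : ℤ) * c : ℤ) : ℂ) * m / n = ((c * m : ℤ) : ℂ) := by
        push_cast
        field_simp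
      rw [h2, e_int]
    rw [Finset.sum_congr rfl h1]
    simp
  · have hζ : e ((z : ℂ) / n) ≠ 1 := by
      intro he
      rw [e, Complex.exp_eq_one_iff] at he
      obtain ⟨c, hc⟩ := he
      apply h
      have hπ : (2 : ℂ) * Real.pi * Complex.I ≠ 0 := by
        simp [Real.pi_ne_zero, Complex.I_ne_zero]
      field_simp at hc
      have hz : (z : ℂ) = c * n := by linear_combination hc
      have : z = c * n := by exact_mod_cast hz
      exact ⟨c, by linarith⟩
    simp_rw [hpow]
    rw [geom_sum_eq hζ]
    have hone : (e ((z : ℂ) / n)) ^ n = 1 := by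
      rw [← hpow n]
      have : (z : ℂ) * n / n = ((z : ℤ) : ℂ) := by field_simp
      rw [this, e_int]
    simp [hone]

lemma half (t : ℝ) : 1 + e t = 2 * e (t / 2) * (Real.cos (Real.pi * t) : ℂ) := by
  have h1 : (Real.cos (Real.pi * t) : ℂ) =
      (Complex.exp (((Real.pi * t : ℝ) : ℂ) * Complex.I) +
        Complex.exp (-(((Real.pi * t : ℝ) : ℂ) * Complex.I))) / 2 := by
    rw [Complex.ofReal_cos, Complex.cos]
    ring_nf
  have h2 : Complex.exp (2 * (Real.pi : ℂ) * Complex.I * ((t : ℂ) / 2)) *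
      Complex.exp (((Real.pi * t : ℝ) : ℂ) * Complex.I) =
      Complex.exp (2 * (Real.pi : ℂ) * Complex.I * (t : ℂ)) := by
    rw [← Complex.exp_add]; congr 1; push_cast; ring
  have h3 : Complex.exp (2 * (Real.pi : ℂ) * Complex.I * ((t : ℂ) / 2)) *
      Complex.exp (-(((Real.pi * t : ℝ) : ℂ) * Complex.I)) = 1 := by
    rw [← Complex.exp_add]
    convert Complex.exp_zero using 2
    push_cast; ring
  rw [h1, e, e]
  push_cast at h2 h3 ⊢
  linear_combination -h2 - h3
theorem stmt_5 (n k : ℕ) (hn : 1 ≤ n) (hk : 1 ≤ k) (a : Fin k → ℤ) (b : ℕ) (hb : b < n)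
    (η : ℂ) (hη : η = -(b : ℂ) + (∑ j, (a j : ℂ)) / 2) :
    ((Finset.univ.filter fun c : Fin k → Fin 2 =>
        (n : ℤ) ∣ (∑ j, a j * ((c j : ℕ) : ℤ)) - b).card : ℂ) =
      (2 ^ k / n) * ∑ m ∈ Finset.Icc 1 n,
        e (η * m / n) * ∏ j : Fin k, (Real.cos (Real.pi * a j * m / n) : ℂ) := by
  have hnpos : 0 < n := hn
  have hn0 : (n : ℂ) ≠ 0 := Nat.cast_ne_zero.2 hnpos.ne'
  have hnR : (n : ℝ) ≠ 0 := Nat.cast_ne_zero.2 hnpos.ne'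
  set F : ℕ → ℂ := fun m => e (η * m / n) * ∏ j : Fin k, ((Real.cos (Real.pi * a j * m / n) : ℝ) : ℂ) with hF
  -- Step 1: count times n as double sum
  have hcount : ((Finset.univ.filter fun c : Fin k → Fin 2 =>
        (n : ℤ) ∣ (∑ j, a j * ((c j : ℕ) : ℤ)) - b).card : ℂ) * n =
      ∑ c : Fin k → Fin 2, ∑ m ∈ Finset.range n,
        e ((((∑ j, a j * ((c j : ℕ) : ℤ)) - b : ℤ) : ℂ) * m / n) := by
    rw [Finset.card_filter, Nat.cast_sum, Finset.sum_mul]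
    refine Finset.sum_congr rfl fun c _ => ?_
    rw [orth n hnpos]
    split_ifs with h <;> simp
  -- Step 2: inner sum over c
  have inner : ∀ m : ℕ, (∑ c : Fin k → Fin 2,
      e ((((∑ j, a j * ((c j : ℕ) : ℤ)) - b : ℤ) : ℂ) * m / n)) =
      e (-(b : ℂ) * m / n) * ∏ j : Fin k, (1 + e ((a j : ℂ) * m / n)) := by
    intro m
    have expand : ∀ c : Fin k → Fin 2,
        e ((((∑ j, a j * ((c j : ℕ) : ℤ)) - b : ℤ) : ℂ) * m / n) =
        e (-(b : ℂ) * m / n) * ∏ j : Fin k, e ((a j : ℂ) * ((c j : ℕ) : ℂ) * m / n) := by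
      intro c
      rw [← e_sum, ← e_add]
      congr 1
      push_cast
      rw [← Finset.sum_div, ← Finset.sum_mul]
      ring
    simp_rw [expand]
    rw [← Finset.mul_sum]
    congr 1
    have hps := Finset.prod_univ_sum (t := fun _ : Fin k => (Finset.univ : Finset (Fin 2)))
      (f := fun j x => e ((a j : ℂ) * ((x : ℕ) : ℂ) * m / n))
    rw [Fintype.piFinset_univ] at hps
    rw [← hps]
    refine Finset.prod_congr rfl fun j _ => ?_
    rw [Fin.sum_univ_two]
    norm_num [e]
  -- Step 3: half-angle per m
  have stepB : ∀ m : ℕ, e (-(b : ℂ) * m / n) * ∏ j : Fin k, (1 + e ((a j : ℂ) * m / n)) =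
      2 ^ k * F m := by
    intro m
    have hprod : (∏ j : Fin k, (1 + e ((a j : ℂ) * m / n))) =
        ∏ j : Fin k, (2 * e ((a j : ℂ) * m / (2 * n)) *
          ((Real.cos (Real.pi * a j * m / n) : ℝ) : ℂ)) := by
      refine Finset.prod_congr rfl fun j _ => ?_
      have h := half ((a j : ℝ) * m / n)
      have h1 : (((a j : ℝ) * m / n : ℝ) : ℂ) = (a j : ℂ) * m / n := by push_cast; ring
      have h2 : Real.pi * ((a j : ℝ) * m / n) = Real.pi * a j * m / n := by ring
      rw [h1, h2] at h
      have h3 : (a j : ℂ) * m / n / 2 = (a j : ℂ) * m / (2 * n) := by ring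
      rw [h3] at h
      exact h
    have key : e (-(b : ℂ) * m / n) * e (∑ j : Fin k, (a j : ℂ) * m / (2 * n)) =
        e (η * m / n) := by
      rw [← e_add]
      congr 1
      rw [hη, ← Finset.sum_div, ← Finset.sum_mul]
      field_simp
    rw [hprod, Finset.prod_mul_distrib, Finset.prod_mul_distrib, Finset.prod_const,
      Finset.card_univ, Fintype.card_fin, ← e_sum]
    simp only [hF]
    linear_combination (∏ j : Fin k, ((Real.cos (Real.pi * a j * m / n) : ℝ) : ℂ)) *
      (2 : ℂ) ^ k * key
  -- Step 4: shift Icc 1 n to range n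
  have hF0 : F 0 = 1 := by
    simp [hF, e]
  have hFn : F n = 1 := by
    have h1 : η * n / n = η := by field_simp
    have h2 : ∀ j : Fin k, Real.pi * (a j : ℝ) * n / n = (a j : ℝ) * Real.pi := by
      intro j
      rw [mul_div_assoc, div_self hnR, mul_one, mul_comm]
    have hcos : ∀ j : Fin k, ((Real.cos (Real.pi * a j * n / n) : ℝ) : ℂ) = (-1 : ℂ) ^ (a j) := by
      intro j
      rw [h2 j]
      have h4 := Real.cos_add_int_mul_pi 0 (a j)
      simp only [zero_add, Real.cos_zero, mul_one] at h4
      rw [h4]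
      push_cast
      ring
    have heη : e η = ∏ j : Fin k, (-1 : ℂ) ^ (a j) := by
      rw [hη, e_add]
      have hb1 : e (-(b : ℂ)) = 1 := by
        rw [show (-(b : ℂ)) = ((-(b : ℤ) : ℤ) : ℂ) by push_cast; ring, e_int]
      rw [hb1, one_mul,
        show (∑ j, (a j : ℂ)) / 2 = ∑ j, (a j : ℂ) / 2 from Finset.sum_div _ _ _, e_sum]
      refine Finset.prod_congr rfl fun j _ => ?_
      rw [e, show 2 * (Real.pi : ℂ) * Complex.I * ((a j : ℂ) / 2) =
        ((a j : ℤ) : ℂ) * (Real.pi * Complex.I) by push_cast; ring, Complex.exp_int_mul,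
        Complex.exp_pi_mul_I]
    simp only [hF]
    rw [h1, heη, Finset.prod_congr rfl fun j _ => hcos j, ← Finset.prod_mul_distrib]
    refine Finset.prod_eq_one fun j _ => ?_
    rw [← mul_zpow]
    norm_num
  have shift : (∑ m ∈ Finset.Icc 1 n, F m) = ∑ m ∈ Finset.range n, F m := by
    have h1 : Finset.Icc 1 n = Finset.range (n + 1) \ {0} := by
      ext x
      simp [Nat.lt_succ_iff, Nat.one_le_iff_ne_zero]
      tauto
    rw [h1, Finset.sum_sdiff_eq_sub (by simp), Finset.sum_range_succ]
    simp [hF0, hFn]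
  -- Assemble
  rw [show (∑ m ∈ Finset.Icc 1 n,
      e (η * m / n) * ∏ j : Fin k, ((Real.cos (Real.pi * a j * m / n) : ℝ) : ℂ)) =
      ∑ m ∈ Finset.Icc 1 n, F m from rfl, shift]
  rw [div_mul_eq_mul_div, eq_div_iff hn0, hcount, Finset.sum_comm]
  rw [Finset.sum_congr rfl fun m _ => (inner m).trans (stepB m), ← Finset.mul_sum]
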